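/- Let v_1, v_2 be linearly independent vectors in a 2-dimensional real vector space W, and let a_1, a_2 > 0 with a_1 ≠ 1. Let H be the group generated by Fix(v_1, a_1) and Fix(v_2, a_2). Then H acts transitively on the nonzero vectors of W. -/

import Mathlib

open Module

variable {W : Type*} [AddCommGroup W] [Module ℝ W]

/-- `Fix v a`: invertible linear endomorphisms of `W` fixing `v` whose determinant
is an integer power of `a`. -/
noncomputable def FixGrp (v : W) (a : ℝ) : Set (W →ₗ[ℝ] W)ˣ :=
  {g | (g : W →ₗ[ℝ] W) v = v ∧ ∃ n : ℤ, LinearMap.det (g : W →ₗ[ℝ] W) = a ^ n}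

noncomputable def shear₁ (B : Basis (Fin 2) ℝ W) (b : ℝ) : (W →ₗ[ℝ] W)ˣ :=
  Units.map (Matrix.toLinAlgEquiv B).toMonoidHom
    ⟨!![1,b;0,1], !![1,-b;0,1], by rw [Matrix.mul_fin_two, Matrix.one_fin_two]; norm_num,
      by rw [Matrix.mul_fin_two, Matrix.one_fin_two]; norm_num⟩

noncomputable def shear₂ (B : Basis (Fin 2) ℝ W) (c : ℝ) : (W →ₗ[ℝ] W)ˣ :=
  Units.map (Matrix.toLinAlgEquiv B).toMonoidHom
    ⟨!![1,0;c,1], !![1,0;-c,1], by rw [Matrix.mul_fin_two, Matrix.one_fin_two]; norm_num,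
      by rw [Matrix.mul_fin_two, Matrix.one_fin_two]; norm_num⟩

lemma shear₁_coe (B : Basis (Fin 2) ℝ W) (b : ℝ) :
    (shear₁ B b : W →ₗ[ℝ] W) = Matrix.toLin B B !![1,b;0,1] := rfl

lemma shear₂_coe (B : Basis (Fin 2) ℝ W) (c : ℝ) :
    (shear₂ B c : W →ₗ[ℝ] W) = Matrix.toLin B B !![1,0;c,1] := rfl

lemma shear₁_apply (B : Basis (Fin 2) ℝ W) (b x y : ℝ) :
    (shear₁ B b : W →ₗ[ℝ] W) (x • B 0 + y • B 1) = (x + y*b) • B 0 + y • B 1 := by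
  rw [shear₁_coe, map_add, map_smul, map_smul, Matrix.toLin_self, Matrix.toLin_self]
  simp [Fin.sum_univ_two, smul_smul]
  module

lemma shear₂_apply (B : Basis (Fin 2) ℝ W) (c x y : ℝ) :
    (shear₂ B c : W →ₗ[ℝ] W) (x • B 0 + y • B 1) = x • B 0 + (y + x*c) • B 1 := by
  rw [shear₂_coe, map_add, map_smul, map_smul, Matrix.toLin_self, Matrix.toLin_self]
  simp [Fin.sum_univ_two, smul_smul]
  module

lemma shear₁_mem (B : Basis (Fin 2) ℝ W) (b a : ℝ) : shear₁ B b ∈ FixGrp (B 0) a := by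
  constructor
  · have := shear₁_apply B b 1 0
    simpa using this
  · exact ⟨0, by rw [shear₁_coe, LinearMap.det_toLin]; simp [Matrix.det_fin_two_of]⟩

lemma shear₂_mem (B : Basis (Fin 2) ℝ W) (c a : ℝ) : shear₂ B c ∈ FixGrp (B 1) a := by
  constructor
  · have := shear₂_apply B c 0 1
    simpa using this
  · exact ⟨0, by rw [shear₂_coe, LinearMap.det_toLin]; simp [Matrix.det_fin_two_of]⟩

lemma exists_to_basis (B : Basis (Fin 2) ℝ W) (S : Subgroup (W →ₗ[ℝ] W)ˣ)
    (h1 : ∀ b, shear₁ B b ∈ S) (h2 : ∀ c, shear₂ B c ∈ S) (u : W) (hu : u ≠ 0) :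
    ∃ h ∈ S, (h : W →ₗ[ℝ] W) u = B 0 := by
  set x := B.repr u 0 with hx
  set y := B.repr u 1 with hy
  have hu' : u = x • B 0 + y • B 1 := by
    have := B.sum_repr u
    rw [Fin.sum_univ_two] at this
    exact this.symm
  have hxy : x ≠ 0 ∨ y ≠ 0 := by
    by_contra h
    push_neg at h
    exact hu (by rw [hu', h.1, h.2]; simp)
  have key : ∀ x' y' : ℝ, y' ≠ 0 → ∀ h0 ∈ S, (h0 : W →ₗ[ℝ] W) u = x' • B 0 + y' • B 1 →
      ∃ h ∈ S, (h : W →ₗ[ℝ] W) u = B 0 := by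
    intro x' y' hy' h0 hS h0u
    refine ⟨shear₂ B (-y') * shear₁ B ((1-x')/y') * h0,
      S.mul_mem (S.mul_mem (h2 _) (h1 _)) hS, ?_⟩
    have e1 : x' + y' * ((1-x')/y') = 1 := by field_simp; ring
    simp only [Units.val_mul, Module.End.mul_apply, h0u, shear₁_apply, shear₂_apply, e1]
    norm_num
  rcases eq_or_ne y 0 with h0 | h0
  · -- x ≠ 0, use shear₂ (1/x) first
    have hx0 : x ≠ 0 := hxy.resolve_right (by simp [h0])
    have step : ((shear₂ B (1/x) : (W →ₗ[ℝ] W)ˣ) : W →ₗ[ℝ] W) u = x • B 0 + (1:ℝ) • B 1 := by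
      rw [hu', h0, shear₂_apply]
      field_simp; simp
    obtain ⟨h, hS, hh⟩ := key x (1:ℝ) one_ne_zero _ (h2 (1/x)) step
    exact ⟨h, hS, hh⟩
  · refine key x y h0 1 S.one_mem ?_
    simp [hu'.symm]

/-- The group generated by Fix(v₁,a₁) and Fix(v₂,a₂) acts transitively on nonzero
vectors of the 2-dimensional space W. -/
theorem fix_groups_act_transitively [FiniteDimensional ℝ W] (hW : finrank ℝ W = 2)
    (v₁ v₂ : W) (hind : LinearIndependent ℝ ![v₁, v₂]) (a₁ a₂ : ℝ)
    (ha₁ : 0 < a₁) (ha₂ : 0 < a₂) (ha₁ne : a₁ ≠ 1) :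
    ∀ u w : W, u ≠ 0 → w ≠ 0 →
      ∃ h ∈ Subgroup.closure (FixGrp v₁ a₁ ∪ FixGrp v₂ a₂),
        (h : W →ₗ[ℝ] W) u = w := by
  intro u w hu hw
  have hcard : Fintype.card (Fin 2) = finrank ℝ W := by simp [hW]
  set B := basisOfLinearIndependentOfCardEqFinrank hind hcard with hB
  have hB0 : B 0 = v₁ := by
    rw [hB]
    rw [show ⇑(basisOfLinearIndependentOfCardEqFinrank hind hcard) = ![v₁, v₂] from
      coe_basisOfLinearIndependentOfCardEqFinrank hind hcard]
    rfl
  have hB1 : B 1 = v₂ := by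
    rw [hB]
    rw [show ⇑(basisOfLinearIndependentOfCardEqFinrank hind hcard) = ![v₁, v₂] from
      coe_basisOfLinearIndependentOfCardEqFinrank hind hcard]
    rfl
  set S := Subgroup.closure (FixGrp v₁ a₁ ∪ FixGrp v₂ a₂) with hS
  have h1 : ∀ b, shear₁ B b ∈ S := fun b =>
    Subgroup.subset_closure (Set.mem_union_left _ (by rw [← hB0]; exact shear₁_mem B b a₁))
  have h2 : ∀ c, shear₂ B c ∈ S := fun c =>
    Subgroup.subset_closure (Set.mem_union_right _ (by rw [← hB1]; exact shear₂_mem B c a₂))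
  obtain ⟨g, hgS, hg⟩ := exists_to_basis B S h1 h2 u hu
  obtain ⟨k, hkS, hk⟩ := exists_to_basis B S h1 h2 w hw
  refine ⟨k⁻¹ * g, S.mul_mem (S.inv_mem hkS) hgS, ?_⟩
  have : ((k⁻¹ : (W →ₗ[ℝ] W)ˣ) : W →ₗ[ℝ] W) ((k : W →ₗ[ℝ] W) w) = w := by
    rw [← Module.End.mul_apply, ← Units.val_mul, inv_mul_cancel, Units.val_one,
      Module.End.one_apply]
  rw [Units.val_mul, Module.End.mul_apply, hg, ← hk, this]
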